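/- arXiv:1510.04242 — 3 statements merged into one kernel-verified Lean document; each statement's English description precedes it below -/
import Mathlib

section
/- If φ is a unit flow on a finite bipartite graph (E,B,W,b,w), then there exists a perfect matching M ⊆ E contained in the support of φ, i.e. φ(e) > 0 for every e ∈ M. -/
/-!
Every black node carries flow 1, so summing `φ` over the edges leaving a set `S` of black nodes
gives `|S|`; these edges, where `φ > 0`, all end in the support-neighbourhood `N(S)`, which
receives total flow `|N(S)|`. Hence `|S| ≤ |N(S)|`, and Hall's theorem yields an injection from
black to white nodes along support edges. Counting the total flow from both sides gives
`|B| = |W|`, so the injection is a bijection and the chosen edges form a perfect matching.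
-/

/-- A perfect matching in a finite bipartite graph `(E,B,W,b,w)` (multiple edges allowed):
a subset `M` of the edges such that every black node is the black endpoint of exactly one
edge of `M`, and every white node is the white endpoint of exactly one edge of `M`. -/
def IsPerfectMatching {E B W : Type*} [Fintype E] [DecidableEq B] [DecidableEq W]
    (b : E → B) (w : E → W) (M : Finset E) : Prop :=
  (∀ v : B, (M.filter fun e => b e = v).card = 1) ∧
  (∀ u : W, (M.filter fun e => w e = u).card = 1)

open Finset

section Fibers

variable {E B R : Type*} [Fintype E] [DecidableEq B] (b : E → B) (φ : E → R)

theorem surjective_of_sum_fiber_ne_zero [AddCommMonoid R]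
    (h : ∀ v : B, ∑ e ∈ univ.filter (fun e => b e = v), φ e ≠ 0) : Function.Surjective b := by
  intro v
  obtain ⟨e, he⟩ := nonempty_of_sum_ne_zero (h v)
  exact ⟨e, (mem_filter.1 he).2⟩

theorem sum_filter_apply_mem_eq_card [AddCommMonoidWithOne R]
    (h : ∀ v : B, ∑ e ∈ univ.filter (fun e => b e = v), φ e = 1) (s : Finset B) :
    ∑ e ∈ univ.filter (fun e => b e ∈ s), φ e = s.card := by
  rw [← sum_fiberwise_eq_sum_filter univ s b φ, sum_congr rfl fun v _ => h v, sum_const,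
    nsmul_one]

theorem card_eq_card_of_sum_fibers_eq_one {W : Type*} [Fintype B] [Fintype W] [DecidableEq W]
    [AddCommMonoidWithOne R] [CharZero R] (w : E → W)
    (hB : ∀ v : B, ∑ e ∈ univ.filter (fun e => b e = v), φ e = 1)
    (hW : ∀ u : W, ∑ e ∈ univ.filter (fun e => w e = u), φ e = 1) :
    Fintype.card B = Fintype.card W := by
  have hB' := sum_filter_apply_mem_eq_card b φ hB univ
  have hW' := sum_filter_apply_mem_eq_card w φ hW univ
  simp only [mem_univ, filter_true, card_univ] at hB' hW'
  exact_mod_cast hB'.symm.trans hW'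

end Fibers

theorem card_filter_image_eq_one_of_bijective {B E X : Type*} [Fintype B] [DecidableEq E]
    [DecidableEq X] {g : B → E} {k : E → X} (hk : Function.Bijective (k ∘ g)) (x : X) :
    ((univ.image g).filter fun e => k e = x).card = 1 := by
  obtain ⟨v, hv⟩ := hk.surjective x
  have hfilter : univ.filter (fun v' => k (g v') = x) = {v} := by
    ext v'
    simpa [← hv] using hk.injective.eq_iff
  rw [filter_image, hfilter, image_singleton, card_singleton]

theorem isPerfectMatching_image {E B W : Type*} [Fintype E] [Fintype B] [DecidableEq E]
    [DecidableEq B] [DecidableEq W] {b : E → B} {w : E → W} {g : B → E}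
    (hb : ∀ v, b (g v) = v) (hw : Function.Bijective (w ∘ g)) :
    IsPerfectMatching b w (univ.image g) :=
  ⟨card_filter_image_eq_one_of_bijective ((funext hb : b ∘ g = id) ▸ Function.bijective_id),
    card_filter_image_eq_one_of_bijective hw⟩

section SupportNeighbors

variable {E B W : Type*} [Fintype E] [DecidableEq B] [DecidableEq W]
  (b : E → B) (w : E → W) (φ : E → ℝ)

noncomputable def supportNeighbors (v : B) : Finset W :=
  (univ.filter fun e => b e = v ∧ 0 < φ e).image w

variable {b w φ}

theorem mem_supportNeighbors {v : B} {u : W} :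
    u ∈ supportNeighbors b w φ v ↔ ∃ e, b e = v ∧ 0 < φ e ∧ w e = u := by
  simp [supportNeighbors, and_assoc]

theorem card_le_card_biUnion_supportNeighbors (hφ : ∀ e, 0 ≤ φ e)
    (hB : ∀ v : B, ∑ e ∈ univ.filter (fun e => b e = v), φ e = 1)
    (hW : ∀ u : W, ∑ e ∈ univ.filter (fun e => w e = u), φ e = 1) (s : Finset B) :
    s.card ≤ (s.biUnion (supportNeighbors b w φ)).card := by
  set N := s.biUnion (supportNeighbors b w φ)
  have hflow : ∑ e ∈ univ.filter (fun e => b e ∈ s), φ e ≤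
      ∑ e ∈ univ.filter (fun e => w e ∈ N), φ e := by
    rw [sum_filter, sum_filter]
    refine sum_le_sum fun e _ => ?_
    split_ifs with hb hw
    · exact le_rfl
    · refine not_lt.1 fun hpos => hw ?_
      exact mem_biUnion.2 ⟨b e, hb, mem_supportNeighbors.2 ⟨e, rfl, hpos, rfl⟩⟩
    · exact hφ e
    · exact le_rfl
  rw [sum_filter_apply_mem_eq_card b φ hB, sum_filter_apply_mem_eq_card w φ hW] at hflow
  exact_mod_cast hflow

end SupportNeighbors

theorem exists_perfectMatching_subset_support_of_unitFlow_general
    {E B W : Type*} [Fintype E] [DecidableEq B] [DecidableEq W]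
    (b : E → B) (w : E → W) (φ : E → ℝ)
    (hφ : ∀ e, 0 ≤ φ e)
    (hB : ∀ v : B, ∑ e ∈ Finset.univ.filter (fun e => b e = v), φ e = 1)
    (hW : ∀ u : W, ∑ e ∈ Finset.univ.filter (fun e => w e = u), φ e = 1) :
    ∃ M : Finset E, IsPerfectMatching b w M ∧ ∀ e ∈ M, 0 < φ e := by
  classical
  have : Fintype B :=
    .ofSurjective b (surjective_of_sum_fiber_ne_zero b φ fun v => by simp [hB v])
  have : Fintype W :=
    .ofSurjective w (surjective_of_sum_fiber_ne_zero w φ fun u => by simp [hW u])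
  obtain ⟨f, hf_inj, hf⟩ := (all_card_le_biUnion_card_iff_exists_injective _).1
    (card_le_card_biUnion_supportNeighbors hφ hB hW)
  have hf_bij : Function.Bijective f := (Fintype.bijective_iff_injective_and_card f).2
    ⟨hf_inj, card_eq_card_of_sum_fibers_eq_one b φ w hB hW⟩
  choose g hgb hgφ hgw using fun v => mem_supportNeighbors.1 (hf v)
  have hwg : w ∘ g = f := funext hgw
  refine ⟨univ.image g, isPerfectMatching_image hgb (hwg ▸ hf_bij), ?_⟩
  simp only [mem_image, mem_univ, true_and, forall_exists_index, forall_apply_eq_imp_iff]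
  exact hgφ

/-- If `φ` is a unit flow on a finite bipartite graph, then there is a perfect matching
contained in the support of `φ`. -/
theorem exists_perfectMatching_subset_support_of_unitFlow
    {E B W : Type*} [Fintype E] [DecidableEq E] [DecidableEq B] [DecidableEq W]
    (b : E → B) (w : E → W) (φ : E → ℝ)
    (hφ : ∀ e, 0 ≤ φ e)
    (hB : ∀ v : B, ∑ e ∈ Finset.univ.filter (fun e => b e = v), φ e = 1)
    (hW : ∀ u : W, ∑ e ∈ Finset.univ.filter (fun e => w e = u), φ e = 1) :
    ∃ M : Finset E, IsPerfectMatching b w M ∧ ∀ e ∈ M, 0 < φ e :=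
  exists_perfectMatching_subset_support_of_unitFlow_general b w φ hφ hB hW
end

section
/- The cone of nonnegative edge weightings with all node sums equal is generated by the perfect matchings: let (E,B,W,b,w) be a finite bipartite graph and let σ be the set of all n : E → ℝ such that n(e) ≥ 0 for every e ∈ E and all the node sums Σ_{e : b(e)=v} n(e) (for v ∈ B) and Σ_{e : w(e)=u} n(e) (for u ∈ W) are equal to one common value. Then σ equals the set of all finite nonnegative linear combinations Σ_P λ_P·1_P (λ_P ≥ 0) of indicator functions of perfect matchings P of the graph. -/
/-!
If `n = ∑ λᵢ 1_{Pᵢ}` then every node sum of `n` is `∑ λᵢ`, since a perfect matching meets each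
node exactly once. Conversely, let `n ≥ 0`, `n ≠ 0` have all node sums equal to `s`; then `s > 0`.
A set `S` of black nodes carries weight `|S| s`, all of it on positive edges into its set `T` of
positive-edge neighbours, which carries weight `|T| s`; so `|S| ≤ |T|`, and counting the total
weight from both sides gives `|B| = |W|`. Hall's theorem then yields a perfect matching `M` of
positive edges, and `n - (min_M n) 1_M` is again nonnegative with equal node sums and has smaller
support, so induction on the support finishes the proof.
-/

open Finset Function

section FiberSums

variable {E V : Type*} [DecidableEq V] {f : E → V} {n : E → ℝ} {s : ℝ}

theorem sum_filter_mem_eq_card_mul [Fintype E] (hf : ∀ v, ∑ e ∈ univ.filter (f · = v), n e = s)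
    (S : Finset V) : ∑ e ∈ univ.filter (f · ∈ S), n e = #S * s := by
  rw [← sum_fiberwise_of_maps_to (g := f) (t := S) fun e he => (mem_filter.mp he).2,
    ← nsmul_eq_mul, ← sum_const]
  refine sum_congr rfl fun v hv => ?_
  rw [filter_filter, ← hf v]
  congr 1
  ext e
  simp only [mem_filter, mem_univ, true_and, and_iff_right_iff_imp]
  rintro rfl
  exact hv

theorem exists_pos_of_sum_filter_eq [Fintype E] (hs : 0 < s) {v : V}
    (hf : ∑ e ∈ univ.filter (f · = v), n e = s) : ∃ e, f e = v ∧ 0 < n e := by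
  obtain ⟨e, he, hpos⟩ := exists_lt_of_sum_lt (s := univ.filter (f · = v)) (f := 0) (g := n)
    (by simpa [hf] using hs)
  exact ⟨e, (mem_filter.mp he).2, hpos⟩

theorem sum_filter_ite_mem_of_card_eq_one [Fintype E] [DecidableEq E] {M : Finset E} {v : V}
    (hM : #(M.filter (f · = v)) = 1) (c : ℝ) :
    ∑ e ∈ univ.filter (f · = v), (if e ∈ M then c else 0) = c := by
  have hfilter : univ.filter (fun e => f e = v ∧ e ∈ M) = M.filter (f · = v) := by
    ext; simp [and_comm]
  rw [← sum_filter, filter_filter, hfilter, sum_const, hM, one_smul]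

theorem card_filter_image_eq_one_of_bijective_s2 [DecidableEq E] {U : Type*} [Fintype U] {m : U → E}
    (h : Bijective (f ∘ m)) (v : V) : #((univ.image m).filter (f · = v)) = 1 := by
  obtain ⟨u, rfl, -⟩ := h.existsUnique v
  rw [filter_image, card_eq_one]
  refine ⟨m u, ?_⟩
  rw [← image_singleton]
  congr 1
  ext a
  simpa using h.1.eq_iff (a := a) (b := u)

end FiberSums

section RegularWeightings

variable {E B W : Type*} [Fintype E] [DecidableEq B] [DecidableEq W] {b : E → B} {w : E → W}
  {n : E → ℝ} {s : ℝ}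

def IsRegularWeighting (b : E → B) (w : E → W) (n : E → ℝ) (s : ℝ) : Prop :=
  (∀ v, ∑ e ∈ univ.filter (b · = v), n e = s) ∧ ∀ u, ∑ e ∈ univ.filter (w · = u), n e = s

theorem IsPerfectMatching.isRegularWeighting_ite [DecidableEq E] {M : Finset E}
    (hM : IsPerfectMatching b w M) (c : ℝ) :
    IsRegularWeighting b w (fun e => if e ∈ M then c else 0) c :=
  ⟨fun v => sum_filter_ite_mem_of_card_eq_one (hM.1 v) c,
    fun u => sum_filter_ite_mem_of_card_eq_one (hM.2 u) c⟩

namespace IsRegularWeighting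

theorem sub {m : E → ℝ} {t : ℝ} (hn : IsRegularWeighting b w n s)
    (hm : IsRegularWeighting b w m t) : IsRegularWeighting b w (n - m) (s - t) := by
  constructor <;> intro _ <;> simp only [Pi.sub_apply, sum_sub_distrib, hn.1, hn.2, hm.1, hm.2]

theorem sum {ι : Type*} {n : ι → E → ℝ} {s : ι → ℝ} (I : Finset ι)
    (h : ∀ i ∈ I, IsRegularWeighting b w (n i) (s i)) :
    IsRegularWeighting b w (∑ i ∈ I, n i) (∑ i ∈ I, s i) := by
  refine ⟨fun v => ?_, fun u => ?_⟩ <;> simp only [Finset.sum_apply] <;> rw [sum_comm]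
  exacts [sum_congr rfl fun i hi => (h i hi).1 v, sum_congr rfl fun i hi => (h i hi).2 u]

theorem le_of_nonneg (h : IsRegularWeighting b w n s) (hn : ∀ e, 0 ≤ n e) (e : E) : n e ≤ s :=
  h.1 (b e) ▸ single_le_sum (fun e _ => hn e) (mem_filter.mpr ⟨mem_univ e, rfl⟩)

theorem card_eq [Fintype B] [Fintype W] (h : IsRegularWeighting b w n s) (hs : s ≠ 0) :
    Fintype.card B = Fintype.card W := by
  have hB := sum_filter_mem_eq_card_mul h.1 univ
  have hW := sum_filter_mem_eq_card_mul h.2 univ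
  simp only [mem_univ, card_univ] at hB hW
  exact_mod_cast mul_right_cancel₀ hs (hB.symm.trans hW)

theorem card_le_card_adj [Fintype W] (h : IsRegularWeighting b w n s) (hn : ∀ e, 0 ≤ n e)
    (hs : 0 < s) (S : Finset B) :
    #S ≤ #(univ.filter fun u => ∃ v ∈ S, ∃ e, b e = v ∧ w e = u ∧ 0 < n e) := by
  set T := univ.filter fun u => ∃ v ∈ S, ∃ e, b e = v ∧ w e = u ∧ 0 < n e
  suffices (#S : ℝ) * s ≤ #T * s by exact_mod_cast le_of_mul_le_mul_right this hs
  calc (#S : ℝ) * s = ∑ e ∈ univ.filter (b · ∈ S), n e := (sum_filter_mem_eq_card_mul h.1 S).symm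
    _ = ∑ e ∈ univ.filter (fun e => b e ∈ S ∧ 0 < n e), n e := by
      rw [← filter_filter]
      exact (sum_filter_of_ne fun e _ hne => (hn e).lt_of_ne' hne).symm
    _ ≤ ∑ e ∈ univ.filter (w · ∈ T), n e := by
      refine sum_le_sum_of_subset_of_nonneg (fun e he => ?_) fun e _ _ => hn e
      simp only [mem_filter, mem_univ, true_and, T] at he ⊢
      exact ⟨b e, he.1, e, rfl, rfl, he.2⟩
    _ = #T * s := sum_filter_mem_eq_card_mul h.2 T

theorem exists_perfectMatching [DecidableEq E] (h : IsRegularWeighting b w n s)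
    (hn : ∀ e, 0 ≤ n e) (hs : 0 < s) : ∃ M, IsPerfectMatching b w M ∧ ∀ e ∈ M, 0 < n e := by
  -- `B` and `W` are finite because every node lies on an edge of positive weight.
  have : Fintype B := Fintype.ofSurjective b fun v =>
    (exists_pos_of_sum_filter_eq hs (h.1 v)).imp fun _ => And.left
  have : Fintype W := Fintype.ofSurjective w fun u =>
    (exists_pos_of_sum_filter_eq hs (h.2 u)).imp fun _ => And.left
  obtain ⟨f, hf_inj, hf⟩ := (Fintype.all_card_le_filter_rel_iff_exists_injective
    fun v u => ∃ e, b e = v ∧ w e = u ∧ 0 < n e).1 (h.card_le_card_adj hn hs)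
  have hf_bij : Bijective f :=
    (Fintype.bijective_iff_injective_and_card f).2 ⟨hf_inj, h.card_eq hs.ne'⟩
  choose m hbm hwm hnm using hf
  have hbm' : b ∘ m = id := funext hbm
  have hwm' : w ∘ m = f := funext hwm
  refine ⟨univ.image m, ⟨card_filter_image_eq_one_of_bijective_s2 ?_,
    card_filter_image_eq_one_of_bijective_s2 ?_⟩, ?_⟩
  · exact hbm' ▸ bijective_id
  · exact hwm' ▸ hf_bij
  · simpa using hnm

theorem exists_perfectMatching_ite_le [DecidableEq E] (h : IsRegularWeighting b w n s)
    (hn : ∀ e, 0 ≤ n e) (hn0 : n ≠ 0) :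
    ∃ M c, IsPerfectMatching b w M ∧ 0 ≤ c ∧ (∀ e, (if e ∈ M then c else 0) ≤ n e) ∧
      #(univ.filter fun e => n e - (if e ∈ M then c else 0) ≠ 0) <
        #(univ.filter fun e => n e ≠ 0) := by
  obtain ⟨e₀, he₀⟩ := Function.ne_iff.1 hn0
  have hs : 0 < s := ((hn e₀).lt_of_ne' he₀).trans_le (h.le_of_nonneg hn e₀)
  obtain ⟨M, hM, hMpos⟩ := h.exists_perfectMatching hn hs
  have hM_ne : M.Nonempty :=
    (card_pos.1 ((hM.1 (b e₀)).symm ▸ one_pos)).mono (filter_subset _ _)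
  obtain ⟨e₁, he₁, hmin⟩ := M.exists_min_image n hM_ne
  refine ⟨M, n e₁, hM, (hMpos e₁ he₁).le, fun e => ?_,
    card_lt_card ⟨fun e he => ?_, fun hsub => ?_⟩⟩
  · split_ifs with he
    exacts [hmin e he, hn e]
  · simp only [mem_filter, mem_univ, true_and] at he ⊢
    split_ifs at he with heM
    exacts [(hMpos e heM).ne', by simpa using he]
  · have := hsub (mem_filter.2 ⟨mem_univ e₁, (hMpos e₁ he₁).ne'⟩)
    simp [he₁] at this

end IsRegularWeighting

end RegularWeightings

section MatchingCombinations

variable {E B W : Type*} [Fintype E] [DecidableEq E] [DecidableEq B] [DecidableEq W]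
  {b : E → B} {w : E → W} {n : E → ℝ} {s : ℝ}

def IsMatchingCombination (b : E → B) (w : E → W) (n : E → ℝ) : Prop :=
  ∃ (r : ℕ) (P : Fin r → Finset E) (lam : Fin r → ℝ),
    (∀ i, 0 ≤ lam i) ∧ (∀ i, IsPerfectMatching b w (P i)) ∧
    ∀ e : E, n e = ∑ i, if e ∈ P i then lam i else 0

theorem isMatchingCombination_zero : IsMatchingCombination b w 0 :=
  ⟨0, Fin.elim0, Fin.elim0, Fin.rec0, Fin.rec0, fun _ => rfl⟩

namespace IsMatchingCombination

theorem ite_add (h : IsMatchingCombination b w n) {M : Finset E} (hM : IsPerfectMatching b w M)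
    {c : ℝ} (hc : 0 ≤ c) : IsMatchingCombination b w fun e => (if e ∈ M then c else 0) + n e := by
  obtain ⟨r, P, lam, hlam, hP, hn⟩ := h
  refine ⟨r + 1, Fin.cons M P, Fin.cons c lam, Fin.cases hc hlam, Fin.cases hM hP, fun e => ?_⟩
  simp [Fin.sum_univ_succ, hn e]

theorem nonneg (h : IsMatchingCombination b w n) (e : E) : 0 ≤ n e := by
  obtain ⟨r, P, lam, hlam, -, hn⟩ := h
  exact hn e ▸ sum_nonneg fun i _ => by split_ifs <;> simp [hlam i]

theorem exists_isRegularWeighting (h : IsMatchingCombination b w n) :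
    ∃ s, IsRegularWeighting b w n s := by
  obtain ⟨r, P, lam, -, hP, hn⟩ := h
  refine ⟨∑ i, lam i, ?_⟩
  have : n = ∑ i, fun e => if e ∈ P i then lam i else 0 := by
    funext e; simp [hn e]
  exact this ▸ IsRegularWeighting.sum univ fun i _ => (hP i).isRegularWeighting_ite (lam i)

end IsMatchingCombination

theorem IsRegularWeighting.isMatchingCombination (h : IsRegularWeighting b w n s)
    (hn : ∀ e, 0 ≤ n e) : IsMatchingCombination b w n := by
  induction hk : #(univ.filter fun e => n e ≠ 0) using Nat.strong_induction_on
    generalizing n s with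
  | _ k ih =>
  rcases eq_or_ne n 0 with rfl | hn0
  · exact isMatchingCombination_zero
  obtain ⟨M, c, hM, hc, hle, hlt⟩ := h.exists_perfectMatching_ite_le hn hn0
  have hrest := ih _ (hk ▸ hlt) (h.sub (hM.isRegularWeighting_ite c))
    (fun e => sub_nonneg.2 (hle e)) rfl
  convert hrest.ite_add hM hc using 1
  funext e
  simp

end MatchingCombinations

/-- The cone of nonnegative edge weightings with all node sums equal to one common value is
exactly the set of finite nonnegative linear combinations of indicator functions of perfect
matchings. -/
theorem cone_eq_nonneg_combinations_of_perfectMatchings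
    {E B W : Type*} [Fintype E] [DecidableEq E] [DecidableEq B] [DecidableEq W]
    (b : E → B) (w : E → W) :
    {n : E → ℝ | (∀ e, 0 ≤ n e) ∧ ∃ s : ℝ,
        (∀ v : B, ∑ e ∈ Finset.univ.filter (fun e => b e = v), n e = s) ∧
        (∀ u : W, ∑ e ∈ Finset.univ.filter (fun e => w e = u), n e = s)} =
    {n : E → ℝ | ∃ (r : ℕ) (P : Fin r → Finset E) (lam : Fin r → ℝ),
        (∀ i, 0 ≤ lam i) ∧ (∀ i, IsPerfectMatching b w (P i)) ∧
        ∀ e : E, n e = ∑ i, if e ∈ P i then lam i else 0} := by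
  ext n
  constructor
  · rintro ⟨hn, s, hs⟩
    exact IsRegularWeighting.isMatchingCombination hs hn
  · intro hn
    exact ⟨IsMatchingCombination.nonneg hn, IsMatchingCombination.exists_isRegularWeighting hn⟩
end

section
/- Determinant expansion over perfect matchings (the expansion underlying Kasteleyn's theorem): let (E,B,W,b,w) be a finite bipartite graph with |B| = |W| = n, fix enumerations β : Fin n ≃ B and ω : Fin n ≃ W, and let l : E → ℂ be edge weights. Define the n×n matrix K by K(i,j) = Σ_{e : b(e)=β(i) and w(e)=ω(j)} l(e). Then det K = Σ_M sgn(π_M) · Π_{e∈M} l(e), where the sum runs over all perfect matchings M of the graph, and π_M ∈ S_n is the permutation defined by π_M(i) = j if and only if the unique edge e ∈ M with b(e) = β(i) satisfies w(e) = ω(j). -/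
open scoped Classical

/-!
Expanding every entry of the Kasteleyn matrix in the Leibniz formula writes `det K` as a sum
over pairs `(σ, f)` of a permutation `σ` and a choice of an edge `f i` from `β i` to `ω (σ i)`
for every `i`. Such a choice is exactly a perfect matching `M = f '' univ`, read off as the
edge of `M` at each black node, and `σ` is then the permutation `π M` that `M` induces.
-/

open Finset Equiv

theorem Matrix.det_of_sum_eq_sum_sigma_piFinset {ι E R : Type*} [Fintype ι] [DecidableEq ι]
    [CommRing R] (S : ι → ι → Finset E) (l : E → R) :
    Matrix.det (Matrix.of fun i j => ∑ e ∈ S i j, l e) =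
      ∑ p ∈ univ.sigma fun σ : Perm ι => Fintype.piFinset fun i => S i (σ i),
        ((Perm.sign p.1 : ℤ) : R) * ∏ i, l (p.2 i) := by
  rw [← Matrix.det_transpose, Matrix.det_apply', sum_sigma]
  refine sum_congr rfl fun σ _ => ?_
  simp only [Matrix.transpose_apply, Matrix.of_apply]
  rw [prod_univ_sum, mul_sum]

theorem card_filter_image_univ_eq_one {ι E X : Type*} [Fintype ι] [DecidableEq E]
    [DecidableEq X]
    {f : ι → E} {g : E → X} (hg : Function.Bijective (g ∘ f)) (x : X) :
    ((univ.image f).filter fun e => g e = x).card = 1 := by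
  rw [filter_image, card_image_of_injective _ hg.injective.of_comp]
  exact (Fintype.existsUnique_iff_card_one _).1 (hg.existsUnique x)

section PerfectMatching

variable {ι E B W : Type*} [Fintype E] [DecidableEq B] [DecidableEq W]
  {b : E → B} {w : E → W} {M : Finset E}

theorem isPerfectMatching_image_univ [Fintype ι] [DecidableEq E] {f : ι → E}
    (hb : Function.Bijective (b ∘ f)) (hw : Function.Bijective (w ∘ f)) :
    IsPerfectMatching b w (univ.image f) :=
  ⟨card_filter_image_univ_eq_one hb, card_filter_image_univ_eq_one hw⟩

theorem IsPerfectMatching.eq_of_black_eq (hM : IsPerfectMatching b w M) {e₁ e₂ : E}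
    (h₁ : e₁ ∈ M) (h₂ : e₂ ∈ M) (h : b e₁ = b e₂) : e₁ = e₂ :=
  card_le_one.1 (hM.1 (b e₂)).le e₁ (mem_filter.2 ⟨h₁, h⟩) e₂ (mem_filter.2 ⟨h₂, rfl⟩)

theorem IsPerfectMatching.image_univ_eq [Fintype ι] [DecidableEq E]
    (hM : IsPerfectMatching b w M) {f : ι → E} (hf : ∀ i, f i ∈ M)
    (hb : Function.Surjective (b ∘ f)) : univ.image f = M := by
  refine Subset.antisymm (fun e he => ?_) fun e he => ?_
  · obtain ⟨i, -, rfl⟩ := mem_image.1 he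
    exact hf i
  · obtain ⟨i, hi⟩ := hb (b e)
    exact mem_image.2 ⟨i, mem_univ i, hM.eq_of_black_eq (hf i) he hi⟩

theorem IsPerfectMatching.eq_of_image_univ_eq [Fintype ι] [DecidableEq E] {f g : ι → E}
    (hM : IsPerfectMatching b w (univ.image f)) (hfg : univ.image f = univ.image g)
    (hb : b ∘ f = b ∘ g) : f = g :=
  funext fun i => hM.eq_of_black_eq (mem_image_of_mem _ (mem_univ i))
    (hfg ▸ mem_image_of_mem _ (mem_univ i)) (congrFun hb i)

end PerfectMatching

theorem det_biadjacency_eq_signed_sum_over_perfectMatchings_general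
    {E B W : Type*} [Fintype E] [DecidableEq B] [DecidableEq W]
    {n : ℕ} (b : E → B) (w : E → W) (β : Fin n ≃ B) (ω : Fin n ≃ W)
    (l : E → ℂ) (π : Finset E → Equiv.Perm (Fin n))
    (hπ : ∀ M : Finset E, IsPerfectMatching b w M →
      ∀ i j : Fin n, π M i = j ↔ ∃ e ∈ M, b e = β i ∧ w e = ω j) :
    Matrix.det (Matrix.of fun i j : Fin n =>
        ∑ e ∈ Finset.univ.filter (fun e => b e = β i ∧ w e = ω j), l e) =
      ∑ M ∈ Finset.univ.filter (fun M : Finset E => IsPerfectMatching b w M),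
        ((Equiv.Perm.sign (π M) : ℤ) : ℂ) * ∏ e ∈ M, l e := by
  rw [Matrix.det_of_sum_eq_sum_sigma_piFinset]
  set P := univ.sigma fun σ : Perm (Fin n) =>
    Fintype.piFinset fun i => univ.filter fun e => b e = β i ∧ w e = ω (σ i)
  have mem_P : ∀ p, p ∈ P ↔ b ∘ p.2 = β ∧ w ∘ p.2 = ω ∘ p.1 := by
    simp [P, funext_iff, forall_and]
  have perfect : ∀ p ∈ P, IsPerfectMatching b w (univ.image p.2) := fun p hp =>
    have ⟨hb, hw⟩ := (mem_P p).1 hp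
    isPerfectMatching_image_univ (hb ▸ β.bijective) (hw ▸ ω.bijective.comp p.1.bijective)
  have π_image : ∀ p ∈ P, π (univ.image p.2) = p.1 := fun p hp => Equiv.ext fun i =>
    (hπ _ (perfect p hp) i (p.1 i)).2 ⟨p.2 i, mem_image_of_mem _ (mem_univ i),
      congrFun ((mem_P p).1 hp).1 i, congrFun ((mem_P p).1 hp).2 i⟩
  refine sum_bij (fun p _ => univ.image p.2)
    (fun p hp => mem_filter.2 ⟨mem_univ _, perfect p hp⟩)
    (fun p hp q hq hpq => ?_) (fun M hM => ?_) (fun p hp => ?_)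
  · have hσ : p.1 = q.1 := by rw [← π_image p hp, ← π_image q hq, hpq]
    have hf : p.2 = q.2 := (perfect p hp).eq_of_image_univ_eq hpq
      (((mem_P p).1 hp).1.trans ((mem_P q).1 hq).1.symm)
    exact Sigma.ext hσ (heq_of_eq hf)
  · have hM := (mem_filter.1 hM).2
    choose f hf using fun i => (hπ M hM i (π M i)).1 rfl
    have hb : b ∘ f = β := funext fun i => (hf i).2.1
    refine ⟨⟨π M, f⟩, (mem_P _).2 ⟨hb, funext fun i => (hf i).2.2⟩,
      hM.image_univ_eq (fun i => (hf i).1) (hb ▸ β.surjective)⟩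
  · have hb : Function.Injective (b ∘ p.2) := ((mem_P p).1 hp).1 ▸ β.injective
    rw [π_image p hp, prod_image hb.of_comp.injOn]

/-- The determinant of the weighted biadjacency (Kasteleyn) matrix expands as a signed sum
over the perfect matchings of the bipartite graph, the sign of a matching `M` being the
sign of the permutation `π M` that it induces between the black and the white nodes. -/
theorem det_biadjacency_eq_signed_sum_over_perfectMatchings
    {E B W : Type*} [Fintype E] [DecidableEq E] [DecidableEq B] [DecidableEq W]
    {n : ℕ} (b : E → B) (w : E → W) (β : Fin n ≃ B) (ω : Fin n ≃ W)
    (l : E → ℂ) (π : Finset E → Equiv.Perm (Fin n))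
    (hπ : ∀ M : Finset E, IsPerfectMatching b w M →
      ∀ i j : Fin n, π M i = j ↔ ∃ e ∈ M, b e = β i ∧ w e = ω j) :
    Matrix.det (Matrix.of fun i j : Fin n =>
        ∑ e ∈ Finset.univ.filter (fun e => b e = β i ∧ w e = ω j), l e) =
      ∑ M ∈ Finset.univ.filter (fun M : Finset E => IsPerfectMatching b w M),
        ((Equiv.Perm.sign (π M) : ℤ) : ℂ) * ∏ e ∈ M, l e :=
  det_biadjacency_eq_signed_sum_over_perfectMatchings_general b w β ω l π hπ
end
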